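/- arXiv:1501.02385 — 3 statements merged into one kernel-verified Lean document; each statement's English description precedes it below -/
import Mathlib

section
/- Let S = B_r(0) ⊂ ℝ² be the open disc of radius r. For every h ∈ ℝ² with 0 < |h|, and every line orthogonal to h at distance y from the center, the one-dimensional measure of the section of (h + S) Δ S along the direction h/|h| is at most 2|h|. Hence the disc satisfies hypothesis (H2) with η(h) = h/|h| and K_S = 2. -/
/-!
The line `t ↦ y + t • η`, with `η = h / ‖h‖` and `y ⊥ η`, meets the disc in the interval
`(-a, a)` with `a = √(r² - ‖y‖²)` (Pythagoras), and meets `h + S` in the same interval shifted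
by `‖h‖`. An interval and its shift by `c ≥ 0` differ by two intervals of length `c`.
-/

open MeasureTheory Set
open scoped symmDiff RealInnerProductSpace

theorem volume_Ioo_add_const_symmDiff_le (a b : ℝ) {c : ℝ} (hc : 0 ≤ c) :
    volume (Ioo (a + c) (b + c) ∆ Ioo a b) ≤ ENNReal.ofReal (2 * c) := by
  have h_right : Ioo (a + c) (b + c) \ Ioo a b ⊆ Ico b (b + c) := by
    rintro t ⟨⟨hat, htb⟩, hnot⟩
    exact ⟨not_lt.1 fun htb' => hnot ⟨by linarith, htb'⟩, htb⟩
  have h_left : Ioo a b \ Ioo (a + c) (b + c) ⊆ Ioc a (a + c) := by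
    rintro t ⟨⟨hat, htb⟩, hnot⟩
    exact ⟨hat, not_lt.1 fun hat' => hnot ⟨hat', by linarith⟩⟩
  calc volume (Ioo (a + c) (b + c) ∆ Ioo a b)
      ≤ volume (Ioo (a + c) (b + c) \ Ioo a b) + volume (Ioo a b \ Ioo (a + c) (b + c)) := by
        rw [symmDiff_def]; exact measure_union_le _ _
    _ ≤ volume (Ico b (b + c)) + volume (Ioc a (a + c)) :=
        add_le_add (measure_mono h_right) (measure_mono h_left)
    _ = ENNReal.ofReal (2 * c) := by
        rw [Real.volume_Ico, Real.volume_Ioc, add_sub_cancel_left, add_sub_cancel_left,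
          ← ENNReal.ofReal_add hc hc, two_mul]

theorem preimage_add_smul_image_add_left {R E : Type*} [Ring R] [AddCommGroup E] [Module R E]
    (S : Set E) (y η : E) (c : R) :
    (fun t : R => y + t • η) ⁻¹' ((c • η + ·) '' S) =
      (fun t => t - c) ⁻¹' ((fun t : R => y + t • η) ⁻¹' S) := by
  ext t
  simp only [image_add_left, mem_preimage, sub_smul]
  congr! 1
  abel

theorem preimage_add_smul_ball_zero {E : Type*} [NormedAddCommGroup E] [InnerProductSpace ℝ E]
    {y η : E} (hη : ‖η‖ = 1) (hyη : ⟪y, η⟫ = 0) {r : ℝ} (hr : 0 ≤ r) :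
    (fun t : ℝ => y + t • η) ⁻¹' Metric.ball 0 r =
      Ioo (-√(r ^ 2 - ‖y‖ ^ 2)) √(r ^ 2 - ‖y‖ ^ 2) := by
  ext t
  have h_pythagoras : ‖y + t • η‖ ^ 2 = ‖y‖ ^ 2 + |t| ^ 2 := by
    rw [norm_add_sq_real, real_inner_smul_right, hyη, norm_smul, hη, Real.norm_eq_abs]
    ring
  rw [mem_preimage, mem_ball_zero_iff, mem_Ioo, ← abs_lt, Real.lt_sqrt (abs_nonneg t),
    ← pow_lt_pow_iff_left₀ (norm_nonneg _) hr two_ne_zero, h_pythagoras, lt_sub_iff_add_lt']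

/-- The section along the unit direction `η` at base point `y` of the symmetric difference
of the disc `B_r(0) ⊂ ℝ²` with its translate by `h` has 1-D measure at most `2‖h‖`,
where `η = h/‖h‖` and `y ⊥ h`.  Hence the disc satisfies (H2) with `K_S = 2`. -/
theorem disc_section_symmDiff_le {r : ℝ} (hr : 0 < r)
    (h : EuclideanSpace ℝ (Fin 2)) (hh : h ≠ 0)
    (y : EuclideanSpace ℝ (Fin 2)) (hy : inner ℝ y h = (0 : ℝ)) :
    volume {t : ℝ |
        y + t • (‖h‖⁻¹ • h) ∈
          symmDiff ((fun s => h + s) '' Metric.ball (0 : EuclideanSpace ℝ (Fin 2)) r)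
            (Metric.ball (0 : EuclideanSpace ℝ (Fin 2)) r)}
      ≤ ENNReal.ofReal (2 * ‖h‖) := by
  set η := ‖h‖⁻¹ • h
  have hη : ‖η‖ = 1 := norm_smul_inv_norm hh
  have hyη : ⟪y, η⟫ = 0 := by rw [real_inner_smul_right, hy, mul_zero]
  have hh_eq : ‖h‖ • η = h := smul_inv_smul₀ (norm_ne_zero_iff.2 hh) h
  have h_translate : (fun t : ℝ => y + t • η) ⁻¹' ((h + ·) '' Metric.ball 0 r) =
      (· - ‖h‖) ⁻¹' ((fun t : ℝ => y + t • η) ⁻¹' Metric.ball 0 r) := by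
    simpa only [hh_eq] using preimage_add_smul_image_add_left (Metric.ball 0 r) y η ‖h‖
  change volume ((fun t : ℝ => y + t • η) ⁻¹'
    (((h + ·) '' Metric.ball 0 r) ∆ Metric.ball 0 r)) ≤ _
  rw [preimage_symmDiff, h_translate, preimage_add_smul_ball_zero hη hyη hr.le,
    preimage_sub_const_Ioo]
  exact volume_Ioo_add_const_symmDiff_le _ _ (norm_nonneg h)
end

section
/- Let S = (0,a) × (0,b) ⊂ ℝ² be an open axis-aligned rectangle. For every h ∈ ℝ² with h ≠ 0, every section of the symmetric difference (h + S) Δ S along the direction η = h/|h| has one-dimensional measure at most 2|h|. -/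
/-!
The section of the convex set `S` along the line `y + ℝη` is an interval `I`, and, since
`h = ‖h‖ • η`, the section of `h + S` is `I + ‖h‖`. Each of `(I + ‖h‖) \ I` and
`I \ (I + ‖h‖)` has diameter at most `‖h‖`.
-/

open MeasureTheory

theorem Real.volume_le_ofReal_of_forall_sub_le {s : Set ℝ} {r : ℝ}
    (hs : ∀ x ∈ s, ∀ z ∈ s, x - z ≤ r) : volume s ≤ ENNReal.ofReal r :=
  (Real.volume_le_diam s).trans <| Metric.ediam_le fun x hx z hz => by
    rw [edist_dist, Real.dist_eq]
    exact ENNReal.ofReal_le_ofReal (abs_sub_le_iff.2 ⟨hs x hx z hz, hs z hz x hx⟩)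

namespace Set.OrdConnected

variable {I : Set ℝ} {r : ℝ}

theorem volume_preimage_sub_diff_le (hI : I.OrdConnected) (hr : 0 ≤ r) :
    volume ((· - r) ⁻¹' I \ I) ≤ ENNReal.ofReal r :=
  Real.volume_le_ofReal_of_forall_sub_le fun x ⟨hxI, _⟩ z ⟨hzI, hz⟩ => by
    simp only [Set.mem_preimage] at hxI hzI
    by_contra! hlt
    exact hz (hI.out hzI hxI ⟨by linarith, by linarith⟩)

theorem volume_diff_preimage_sub_le (hI : I.OrdConnected) (hr : 0 ≤ r) :
    volume (I \ (· - r) ⁻¹' I) ≤ ENNReal.ofReal r :=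
  Real.volume_le_ofReal_of_forall_sub_le fun x ⟨hxI, hx⟩ z ⟨hzI, _⟩ => by
    simp only [Set.mem_preimage] at hx
    by_contra! hlt
    exact hx (hI.out hzI hxI ⟨by linarith, by linarith⟩)

theorem volume_symmDiff_preimage_sub_le (hI : I.OrdConnected) (hr : 0 ≤ r) :
    volume (symmDiff ((· - r) ⁻¹' I) I) ≤ ENNReal.ofReal (2 * r) := by
  calc volume (symmDiff ((· - r) ⁻¹' I) I)
      ≤ volume ((· - r) ⁻¹' I \ I) + volume (I \ (· - r) ⁻¹' I) := measure_union_le _ _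
    _ ≤ ENNReal.ofReal r + ENNReal.ofReal r :=
        add_le_add (hI.volume_preimage_sub_diff_le hr) (hI.volume_diff_preimage_sub_le hr)
    _ = ENNReal.ofReal (2 * r) := by rw [← ENNReal.ofReal_add hr hr, two_mul]

end Set.OrdConnected

theorem Convex.volume_lineSection_symmDiff_add_smul_le {E : Type*} [AddCommGroup E] [Module ℝ E]
    {S : Set E} (hS : Convex ℝ S) (y η : E) {r : ℝ} (hr : 0 ≤ r) :
    volume {t : ℝ | y + t • η ∈ symmDiff ((r • η + ·) '' S) S} ≤ ENNReal.ofReal (2 * r) := by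
  have hI : {t : ℝ | y + t • η ∈ S}.OrdConnected :=
    ((hS.translate_preimage_right y).linear_preimage (LinearMap.toSpanSingleton ℝ E η)).ordConnected
  convert hI.volume_symmDiff_preimage_sub_le hr using 2
  ext t
  simp only [Set.image_add_left, Set.mem_ofPred_eq, Set.mem_symmDiff, Set.mem_preimage, sub_smul]
  rw [show -(r • η) + (y + t • η) = y + (t • η - r • η) by abel]

theorem rectangle_section_symmDiff_le_general (a b : ℝ)
    (h : EuclideanSpace ℝ (Fin 2))
    (y : EuclideanSpace ℝ (Fin 2)) :
    volume {t : ℝ |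
        y + t • (‖h‖⁻¹ • h) ∈
          symmDiff ((fun s => h + s) '' {x : EuclideanSpace ℝ (Fin 2) |
              x 0 ∈ Set.Ioo 0 a ∧ x 1 ∈ Set.Ioo 0 b})
            {x : EuclideanSpace ℝ (Fin 2) | x 0 ∈ Set.Ioo 0 a ∧ x 1 ∈ Set.Ioo 0 b}}
      ≤ ENNReal.ofReal (2 * ‖h‖) := by
  have hS : Convex ℝ {x : EuclideanSpace ℝ (Fin 2) | x 0 ∈ Set.Ioo 0 a ∧ x 1 ∈ Set.Ioo 0 b} :=
    ((convex_Ioo 0 a).linear_preimage (EuclideanSpace.proj 0 : _ →L[ℝ] ℝ).toLinearMap).inter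
      ((convex_Ioo 0 b).linear_preimage (EuclideanSpace.proj 1 : _ →L[ℝ] ℝ).toLinearMap)
  have hη : ‖h‖ • ‖h‖⁻¹ • h = h := by
    rcases eq_or_ne h 0 with rfl | hh
    · simp
    · exact smul_inv_smul₀ (norm_ne_zero_iff.2 hh) h
  have := hS.volume_lineSection_symmDiff_add_smul_le y (‖h‖⁻¹ • h) (norm_nonneg h)
  rwa [hη] at this

/-- For the open rectangle `S = (0,a) × (0,b) ⊂ ℝ²` and any `h ≠ 0`, every section of the
symmetric difference `(h + S) Δ S` along the direction `η = h/‖h‖` has one-dimensional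
measure at most `2‖h‖`. -/
theorem rectangle_section_symmDiff_le (a b : ℝ) (ha : 0 < a) (hb : 0 < b)
    (h : EuclideanSpace ℝ (Fin 2)) (hh : h ≠ 0)
    (y : EuclideanSpace ℝ (Fin 2)) (hy : inner ℝ y h = (0 : ℝ)) :
    volume {t : ℝ |
        y + t • (‖h‖⁻¹ • h) ∈
          symmDiff ((fun s => h + s) '' {x : EuclideanSpace ℝ (Fin 2) |
              x 0 ∈ Set.Ioo 0 a ∧ x 1 ∈ Set.Ioo 0 b})
            {x : EuclideanSpace ℝ (Fin 2) | x 0 ∈ Set.Ioo 0 a ∧ x 1 ∈ Set.Ioo 0 b}}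
      ≤ ENNReal.ofReal (2 * ‖h‖) :=
  rectangle_section_symmDiff_le_general a b h y
end

section
/- The 2-D rotational force f_{rot,2d} defined with the rotation matrix A = [[0,1],[−1,0]] satisfies, for every t, the pointwise bound |f_{rot,2d}(t,x)| ≤ 2 (Σ_{i=2}^{N−1} |v_{i−1}(t)|) · max_{i=2,…,N−1} (‖z_i − z_{i−1}‖_{C} + ‖z_i − z_{i−1}‖²_{C} / (2r)), provided |z_i(t) − z_j(t)| > 2r for i ≠ j. -/
/-!
The matrix `A` is a quarter turn, so it preserves norms. Writing `dᵢ = |z_{i-1} − z_i|` and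
`eᵢ = |z_{i+1} − z_i|`, the coefficient `dᵢ² / eᵢ²` in front of `A(±(z_{i+1} − z_i))` therefore
contributes `dᵢ² / eᵢ`, and the indicators are at most `1`, so every bracket in either sum has
norm at most `dᵢ + dᵢ² / eᵢ`. Separation gives `eᵢ > 2r`, hence the bracket is at most `M`, and
each of the two sums contributes `(Σ |v_{i-1}|) M`.
-/

theorem EuclideanSpace.norm_eq_of_ofLp_eq_quarterTurn {x y : EuclideanSpace ℝ (Fin 2)}
    (h : y.ofLp = ![x 1, -x 0]) : ‖y‖ = ‖x‖ := by
  rw [EuclideanSpace.norm_eq, EuclideanSpace.norm_eq, h]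
  simp only [Fin.sum_univ_two, Matrix.cons_val_zero, Matrix.cons_val_one, Real.norm_eq_abs,
    sq_abs, neg_sq]
  ring_nf

theorem norm_indicator_one_le {α R : Type*} [SeminormedRing R] [NormOneClass R]
    (s : Set α) (x : α) : ‖s.indicator (fun _ => (1 : R)) x‖ ≤ 1 :=
  (norm_indicator_le_norm_self _ _).trans norm_one.le

section NormPreserving

variable {E : Type*} [NormedAddCommGroup E] [NormedSpace ℝ E] {A : E → E}

/-- With Lean's `x / 0 = 0` this holds also when `‖b‖ = 0`. -/
theorem norm_sq_div_sq_smul_of_norm_eq (d : ℝ) {w b : E} (h : ‖w‖ = ‖b‖) :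
    ‖(d ^ 2 / ‖b‖ ^ 2) • w‖ = d ^ 2 / ‖b‖ := by
  rw [norm_smul, h, Real.norm_of_nonneg (by positivity)]
  rcases eq_or_ne ‖b‖ 0 with hb | hb
  · simp [hb]
  · field_simp

theorem norm_smul_sub_smul_sq_div_sq_le (hA : ∀ y, ‖A y‖ = ‖y‖) {c₁ c₂ : ℝ}
    (h₁ : ‖c₁‖ ≤ 1) (h₂ : ‖c₂‖ ≤ 1) {u w : E} {d e : ℝ} (hu : ‖u‖ = d) (hw : ‖w‖ = e) :
    ‖c₁ • A u - (c₂ * (d ^ 2 / e ^ 2)) • A w‖ ≤ d + d ^ 2 / e := by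
  subst hu hw
  calc ‖c₁ • A u - (c₂ * (‖u‖ ^ 2 / ‖w‖ ^ 2)) • A w‖
      ≤ ‖c₁‖ * ‖A u‖ + ‖c₂‖ * ‖(‖u‖ ^ 2 / ‖w‖ ^ 2) • A w‖ := by
        rw [mul_smul, ← norm_smul, ← norm_smul]; exact norm_sub_le _ _
    _ ≤ 1 * ‖u‖ + 1 * (‖u‖ ^ 2 / ‖w‖) := by
        rw [hA, norm_sq_div_sq_smul_of_norm_eq _ (hA w)]
        gcongr
    _ = ‖u‖ + ‖u‖ ^ 2 / ‖w‖ := by ring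

end NormPreserving

theorem rot_force_2d_pointwise_bound_general (T r : ℝ) (hr : 0 < r)
    (N : ℕ)
    (A : EuclideanSpace ℝ (Fin 2) → EuclideanSpace ℝ (Fin 2))
    (hA : ∀ x, A x = ![x 1, -x 0])
    (v : ℕ → ℝ → ℝ) (z : ℕ → ℝ → EuclideanSpace ℝ (Fin 2))
    (S : ℕ → ℝ → Set (EuclideanSpace ℝ (Fin 2)))
    (hfar : ∀ t ∈ Set.Icc (0 : ℝ) T, ∀ i ∈ Finset.Icc 1 N, ∀ j ∈ Finset.Icc 1 N,
      i ≠ j → ‖z i t - z j t‖ > 2 * r)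
    (M : ℝ)
    (hM : ∀ i ∈ Finset.Icc 2 (N - 1), ∀ t ∈ Set.Icc (0 : ℝ) T,
      ‖z i t - z (i - 1) t‖ + ‖z i t - z (i - 1) t‖ ^ 2 / (2 * r) ≤ M)
    (f : ℝ → EuclideanSpace ℝ (Fin 2) → EuclideanSpace ℝ (Fin 2))
    (hf : ∀ t x, f t x =
      (∑ i ∈ Finset.Icc 2 (N - 1), v (i - 1) t •
        ((Set.indicator (S (i - 1) t) (fun _ => (1 : ℝ)) x) •
            A (z (i - 1) t - z i t) -
         (Set.indicator (S (i + 1) t) (fun _ => (1 : ℝ)) x *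
            (‖z (i - 1) t - z i t‖ ^ 2 / ‖z (i + 1) t - z i t‖ ^ 2)) •
            A (z (i + 1) t - z i t))) +
      (∑ i ∈ Finset.Icc 2 (N - 1), (Set.indicator (S i t) (fun _ => (1 : ℝ)) x *
          v (i - 1) t) •
        (A (z i t - z (i - 1) t) -
          (‖z (i - 1) t - z i t‖ ^ 2 / ‖z (i + 1) t - z i t‖ ^ 2) •
            A (z i t - z (i + 1) t)))) :
    ∀ t ∈ Set.Icc (0 : ℝ) T, ∀ x,
      ‖f t x‖ ≤ 2 * (∑ i ∈ Finset.Icc 2 (N - 1), |v (i - 1) t|) * M := by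
  intro t ht x
  have hrot (y : EuclideanSpace ℝ (Fin 2)) : ‖A y‖ = ‖y‖ :=
    EuclideanSpace.norm_eq_of_ofLp_eq_quarterTurn (hA y)
  have hbracket : ∀ i ∈ Finset.Icc 2 (N - 1),
      ‖z (i - 1) t - z i t‖ + ‖z (i - 1) t - z i t‖ ^ 2 / ‖z (i + 1) t - z i t‖ ≤ M := by
    intro i hi
    obtain ⟨hi₂, hiN⟩ := Finset.mem_Icc.mp hi
    have hfar_next : 2 * r < ‖z (i + 1) t - z i t‖ :=
      hfar t ht (i + 1) (Finset.mem_Icc.mpr ⟨by omega, by omega⟩) i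
        (Finset.mem_Icc.mpr ⟨by omega, by omega⟩) (by omega)
    rw [norm_sub_rev]
    calc _ ≤ ‖z i t - z (i - 1) t‖ + ‖z i t - z (i - 1) t‖ ^ 2 / (2 * r) := by gcongr
      _ ≤ M := hM i hi t ht
  rw [hf, two_mul, add_mul, Finset.sum_mul]
  refine (norm_add_le _ _).trans (add_le_add ?_ ?_) <;>
    refine (norm_sum_le _ _).trans (Finset.sum_le_sum fun i hi => ?_)
  · rw [norm_smul, Real.norm_eq_abs]
    gcongr
    exact (norm_smul_sub_smul_sq_div_sq_le hrot (norm_indicator_one_le _ _)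
      (norm_indicator_one_le _ _) rfl rfl).trans (hbracket i hi)
  · rw [mul_comm, mul_smul, norm_smul, Real.norm_eq_abs, smul_sub, ← mul_smul]
    gcongr
    exact (norm_smul_sub_smul_sq_div_sq_le hrot (norm_indicator_one_le _ _)
      (norm_indicator_one_le _ _) (norm_sub_rev _ _) (norm_sub_rev _ _)).trans (hbracket i hi)

/-- Pointwise bound for the 2-D rotational force: if all pairwise distances
`|z_i(t) − z_j(t)|` exceed `2r`, then
`|f_{rot,2d}(t,x)| ≤ 2 (Σ |v_{i-1}(t)|) · maxᵢ(‖z_i − z_{i-1}‖ + ‖z_i − z_{i-1}‖²/(2r))`,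
the max being expressed via any bound `M` on the bracketed quantities. -/
theorem rot_force_2d_pointwise_bound (T r : ℝ) (hT : 0 < T) (hr : 0 < r)
    (N : ℕ) (hN : 3 ≤ N)
    (A : EuclideanSpace ℝ (Fin 2) → EuclideanSpace ℝ (Fin 2))
    (hA : ∀ x, A x = ![x 1, -x 0])
    (v : ℕ → ℝ → ℝ) (z : ℕ → ℝ → EuclideanSpace ℝ (Fin 2))
    (S : ℕ → ℝ → Set (EuclideanSpace ℝ (Fin 2)))
    (hfar : ∀ t ∈ Set.Icc (0 : ℝ) T, ∀ i ∈ Finset.Icc 1 N, ∀ j ∈ Finset.Icc 1 N,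
      i ≠ j → ‖z i t - z j t‖ > 2 * r)
    (M : ℝ)
    (hM : ∀ i ∈ Finset.Icc 2 (N - 1), ∀ t ∈ Set.Icc (0 : ℝ) T,
      ‖z i t - z (i - 1) t‖ + ‖z i t - z (i - 1) t‖ ^ 2 / (2 * r) ≤ M)
    (f : ℝ → EuclideanSpace ℝ (Fin 2) → EuclideanSpace ℝ (Fin 2))
    (hf : ∀ t x, f t x =
      (∑ i ∈ Finset.Icc 2 (N - 1), v (i - 1) t •
        ((Set.indicator (S (i - 1) t) (fun _ => (1 : ℝ)) x) •
            A (z (i - 1) t - z i t) -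
         (Set.indicator (S (i + 1) t) (fun _ => (1 : ℝ)) x *
            (‖z (i - 1) t - z i t‖ ^ 2 / ‖z (i + 1) t - z i t‖ ^ 2)) •
            A (z (i + 1) t - z i t))) +
      (∑ i ∈ Finset.Icc 2 (N - 1), (Set.indicator (S i t) (fun _ => (1 : ℝ)) x *
          v (i - 1) t) •
        (A (z i t - z (i - 1) t) -
          (‖z (i - 1) t - z i t‖ ^ 2 / ‖z (i + 1) t - z i t‖ ^ 2) •
            A (z i t - z (i + 1) t)))) :
    ∀ t ∈ Set.Icc (0 : ℝ) T, ∀ x,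
      ‖f t x‖ ≤ 2 * (∑ i ∈ Finset.Icc 2 (N - 1), |v (i - 1) t|) * M :=
  rot_force_2d_pointwise_bound_general T r hr N A hA v z S hfar M hM f hf
end
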